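/- Let w ∈ F (the standard fundamental domain of PSL₂(ℤ)) and set j = (1+i√3)/2, j' = (−1+i√3)/2. Then min over nontrivial γ ∈ PSL₂(ℤ) of ρ(w, γw) is ≫ min{ρ(w,i), ρ(w,j), ρ(w,j'), 1/Im(w)}, with an absolute implied constant. -/

import Mathlib

/-!
Write `γ = !![a, b; c, d]`. Then `sinh (ρ(w, γ w) / 2) = |c w² + (d - a) w - b| / (2 Im w)`, and the
quadratic factors as `c (w - p) (w - q)` over the fixed points `p, q` of `γ`. If `c = 0`, `γ` is a
nontrivial translation and the quadratic is the constant `-b ≠ 0`. If `|a + d| ≥ 2` the fixed points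
are real, so each factor is at least `Im w`. If `|a + d| < 2`, then `q = p̄` and `|w - q| ≥ Im w`,
so it remains to bound `|w - p|` from below: integrality of the entries forces `p` to be `i`, `j` or
`j'` (where Euclidean and hyperbolic distances are comparable), or to satisfy `Im p ≤ 1/2` or
`|Re p| ≥ 1`, which keeps it at Euclidean distance `≥ 1 / (4 Im w)` from `w ∈ F`.
-/

open UpperHalfPlane

noncomputable def ptJ : UpperHalfPlane :=
  UpperHalfPlane.mk ((1/2 : ℝ) + (Real.sqrt 3 / 2 : ℝ) * Complex.I) (by
    simp only [Complex.add_im, Complex.ofReal_im, Complex.mul_im, Complex.I_im,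
      Complex.ofReal_re, Complex.I_re]
    positivity)

noncomputable def ptJ' : UpperHalfPlane :=
  UpperHalfPlane.mk ((-(1/2) : ℝ) + (Real.sqrt 3 / 2 : ℝ) * Complex.I) (by
    simp only [Complex.add_im, Complex.ofReal_im, Complex.mul_im, Complex.I_im,
      Complex.ofReal_re, Complex.I_re]
    positivity)

open Real
open scoped MatrixGroups Modular

theorem Real.div_one_add_le_arsinh {x : ℝ} (hx : 0 ≤ x) : x / (1 + x) ≤ arsinh x := by
  have h1x : 0 < 1 + x := by linarith
  calc x / (1 + x) = 1 - (1 + x)⁻¹ := by field_simp; ring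
    _ ≤ log (1 + x) := one_sub_inv_le_log_of_pos h1x
    _ ≤ arsinh x := by
      rw [arsinh]
      refine log_le_log h1x ?_
      have : 1 ≤ √(1 + x ^ 2) := one_le_sqrt.mpr (by nlinarith)
      linarith

theorem Complex.im_sub_im_le_norm_sub (w r : ℂ) : w.im - r.im ≤ ‖w - r‖ := by
  simpa using Complex.im_le_norm (w - r)

theorem Matrix.SpecialLinearGroup.det_fin_two_eq_one {R : Type*} [CommRing R] (g : SL(2, R)) :
    g 0 0 * g 1 1 - g 0 1 * g 1 0 = 1 := by
  rw [← Matrix.det_fin_two]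
  exact g.det_coe

namespace UpperHalfPlane

theorem dist_le_two_mul_norm_sub {z w : ℍ} (hz : 1 / 2 ≤ z.im) (hw : 1 / 2 ≤ w.im) :
    dist z w ≤ 2 * ‖(z : ℂ) - w‖ := by
  have hsqrt : 1 / 2 ≤ √(z.im * w.im) := le_sqrt_of_sq_le (by nlinarith)
  calc dist z w ≤ dist (z : ℂ) w / √(z.im * w.im) := dist_le_dist_coe_div_sqrt z w
    _ ≤ dist (z : ℂ) w / (1 / 2) := by gcongr
    _ = 2 * ‖(z : ℂ) - w‖ := by rw [dist_eq_norm]; ring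

/-- `z - g • z = fixedPointPoly g z / (c z + d)`, so the roots are the fixed points of `g`. -/
noncomputable def fixedPointPoly (g : SL(2, ℝ)) (z : ℂ) : ℂ :=
  g 1 0 * z ^ 2 + (g 1 1 - g 0 0) * z - g 0 1

theorem dist_smul_eq (g : SL(2, ℝ)) (z : ℍ) :
    dist z (g • z) = 2 * arsinh (‖fixedPointPoly g z‖ / (2 * z.im)) := by
  set D : ℂ := g 1 0 * z + g 1 1
  have hD : D ≠ 0 := by simpa [denom] using denom_ne_zero g z
  have hDpos : 0 < ‖D‖ := norm_pos_iff.mpr hD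
  have hcoe : ((g • z : ℍ) : ℂ) = (g 0 0 * z + g 0 1) / D := by
    simpa using coe_specialLinearGroup_apply g z
  have him : (g • z).im = z.im / ‖D‖ ^ 2 := by
    rw [← Complex.normSq_eq_norm_sq]
    exact (im_smul_eq_div_normSq (Matrix.SpecialLinearGroup.mapGL ℝ g) z).trans
      (by simp [D, denom])
  have hdist : dist (z : ℂ) (g • z : ℍ) = ‖fixedPointPoly g z‖ / ‖D‖ := by
    rw [dist_eq_norm, hcoe, sub_div' hD, norm_div, fixedPointPoly]
    congr 2
    ring
  have hsqrt : √(z.im * (g • z).im) = z.im / ‖D‖ := by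
    rw [him, ← mul_div_assoc, ← sq, sqrt_div' _ (sq_nonneg _), sqrt_sq z.im_pos.le,
      sqrt_sq hDpos.le]
  rw [dist_eq, hdist, hsqrt]
  field_simp

/-- When `(tr g)² ≤ 4` and `c ≠ 0`: the root of `fixedPointPoly g` with nonnegative imaginary
part. -/
noncomputable def ellipticFixedPoint (g : SL(2, ℝ)) : ℂ :=
  ⟨(g 0 0 - g 1 1) / (2 * g 1 0), √(4 - (g 0 0 + g 1 1) ^ 2) / (2 * |g 1 0|)⟩

variable {g : SL(2, ℝ)}

theorem im_ellipticFixedPoint_le_one_half (hc : 2 ≤ |g 1 0|) :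
    (ellipticFixedPoint g).im ≤ 1 / 2 := by
  have hsqrt : √(4 - (g 0 0 + g 1 1) ^ 2) ≤ 2 :=
    (sqrt_le_left zero_le_two).mpr (by nlinarith [sq_nonneg (g 0 0 + g 1 1)])
  rw [ellipticFixedPoint, div_le_iff₀ (by positivity)]
  linarith

theorem fixedPointPoly_eq_mul_sub_mul_sub {r s : ℂ}
    (hsum : g 1 0 * (r + s) = g 0 0 - g 1 1) (hprod : g 1 0 * (r * s) = -g 0 1) (z : ℂ) :
    fixedPointPoly g z = g 1 0 * (z - r) * (z - s) := by
  rw [fixedPointPoly]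
  linear_combination z * hsum - hprod

theorem abs_mul_im_sq_le_norm_fixedPointPoly (hc : g 1 0 ≠ 0)
    (ht : 4 ≤ (g 0 0 + g 1 1) ^ 2) (z : ℍ) :
    |g 1 0| * z.im ^ 2 ≤ ‖fixedPointPoly g z‖ := by
  have hdet := Matrix.SpecialLinearGroup.det_fin_two_eq_one g
  set s := √((g 0 0 + g 1 1) ^ 2 - 4)
  have hs : s ^ 2 = (g 0 0 + g 1 1) ^ 2 - 4 := sq_sqrt (by linarith)
  set r₁ := (g 0 0 - g 1 1 + s) / (2 * g 1 0)
  set r₂ := (g 0 0 - g 1 1 - s) / (2 * g 1 0)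
  have hsum : g 1 0 * (r₁ + r₂) = g 0 0 - g 1 1 := by
    simp only [r₁, r₂]
    field_simp
    ring
  have hprod : g 1 0 * (r₁ * r₂) = -g 0 1 := by
    simp only [r₁, r₂]
    field_simp
    linear_combination -hs - 4 * hdet
  rw [fixedPointPoly_eq_mul_sub_mul_sub (r := r₁) (s := r₂) (by exact_mod_cast hsum)
    (by exact_mod_cast hprod), norm_mul, norm_mul, Complex.norm_real, norm_eq_abs, mul_assoc, sq]
  gcongr
  · simpa using Complex.im_sub_im_le_norm_sub z r₁
  · simpa using Complex.im_sub_im_le_norm_sub z r₂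

theorem abs_mul_im_mul_norm_sub_le_norm_fixedPointPoly (hc : g 1 0 ≠ 0)
    (ht : (g 0 0 + g 1 1) ^ 2 ≤ 4) (z : ℍ) :
    |g 1 0| * z.im * ‖(z : ℂ) - ellipticFixedPoint g‖ ≤ ‖fixedPointPoly g z‖ := by
  have hdet := Matrix.SpecialLinearGroup.det_fin_two_eq_one g
  set p := ellipticFixedPoint g
  have hy : p.im ^ 2 = (4 - (g 0 0 + g 1 1) ^ 2) / (4 * g 1 0 ^ 2) := by
    simp only [p, ellipticFixedPoint, div_pow, mul_pow, sq_abs, sq_sqrt (sub_nonneg.mpr ht)]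
    norm_num
  have hsum : g 1 0 * (2 * p.re) = g 0 0 - g 1 1 := by
    simp only [p, ellipticFixedPoint]
    field_simp
  have hprod : g 1 0 * Complex.normSq p = -g 0 1 := by
    rw [Complex.normSq_apply, ← sq, ← sq, hy]
    simp only [p, ellipticFixedPoint]
    field_simp
    linear_combination -16 * hdet
  rw [fixedPointPoly_eq_mul_sub_mul_sub (r := p) (s := (starRingEnd ℂ) p)
    (by rw [Complex.add_conj]; exact_mod_cast hsum)
    (by rw [Complex.mul_conj]; exact_mod_cast hprod),
    norm_mul, norm_mul, Complex.norm_real, norm_eq_abs, mul_assoc, mul_assoc, mul_comm z.im]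
  gcongr
  have hp : 0 ≤ p.im := by simp only [p, ellipticFixedPoint]; positivity
  have := Complex.im_sub_im_le_norm_sub z ((starRingEnd ℂ) p)
  rw [Complex.conj_im, coe_im] at this
  linarith

end UpperHalfPlane

namespace ModularGroup

theorem one_half_le_im_of_mem_fd {w : ℍ} (hw : w ∈ 𝒟) : 1 / 2 ≤ w.im := by
  nlinarith [three_le_four_mul_im_sq_of_mem_fd hw, w.im_pos]

theorem one_div_im_le_four_mul_norm_sub {w : ℍ} (hw : w ∈ 𝒟) {p : ℂ}
    (hp : p.im ≤ 1 / 2 ∨ 1 ≤ |p.re|) : 1 / w.im ≤ 4 * ‖(w : ℂ) - p‖ := by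
  have hy := three_le_four_mul_im_sq_of_mem_fd hw
  have hy0 := w.im_pos
  rw [div_le_iff₀ hy0]
  rcases hp with hp | hp
  · have := Complex.im_sub_im_le_norm_sub w p
    rw [coe_im] at this
    nlinarith
  · have : 1 / 2 ≤ ‖(w : ℂ) - p‖ :=
      calc 1 / 2 ≤ |p.re| - |w.re| := by linarith [hw.2]
        _ ≤ |((w : ℂ) - p).re| := by
          rw [Complex.sub_re, coe_re, abs_sub_comm]; exact abs_sub_abs_le_abs_sub _ _
        _ ≤ ‖(w : ℂ) - p‖ := Complex.abs_re_le_norm _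
    nlinarith

theorem one_le_norm_fixedPointPoly_of_c_eq_zero {γ : SL(2, ℤ)} (hc : γ 1 0 = 0) (h1 : γ ≠ 1)
    (h2 : γ ≠ -1) (z : ℂ) : 1 ≤ ‖fixedPointPoly γ z‖ := by
  have had : γ 0 0 * γ 1 1 = 1 := by simpa [hc] using γ.det_fin_two_eq_one
  have hb : γ 0 1 ≠ 0 := by
    intro hb
    rcases Int.eq_one_or_neg_one_of_mul_eq_one' had with ⟨ha, hd⟩ | ⟨ha, hd⟩
    · exact h1 (by ext i j; fin_cases i <;> fin_cases j <;> simp [ha, hb, hc, hd])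
    · exact h2 (by ext i j; fin_cases i <;> fin_cases j <;> simp [ha, hb, hc, hd])
  have hda : γ 1 1 = γ 0 0 := by
    rcases Int.eq_one_or_neg_one_of_mul_eq_one' had with ⟨ha, hd⟩ | ⟨ha, hd⟩ <;> rw [ha, hd]
  have : (1 : ℝ) ≤ |(γ 0 1 : ℝ)| := by exact_mod_cast Int.one_le_abs hb
  simpa [fixedPointPoly, hc, hda] using this

theorem ellipticFixedPoint_eq_or {γ : SL(2, ℤ)} (hc : γ 1 0 ≠ 0)
    (ht : (γ 0 0 + γ 1 1) ^ 2 < 4) :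
    ellipticFixedPoint γ = I ∨ ellipticFixedPoint γ = ptJ ∨ ellipticFixedPoint γ = ptJ' ∨
      (ellipticFixedPoint γ).im ≤ 1 / 2 ∨ 1 ≤ |(ellipticFixedPoint γ).re| := by
  by_cases hc2 : 2 ≤ |γ 1 0|
  · exact Or.inr (Or.inr (Or.inr (Or.inl (im_ellipticFixedPoint_le_one_half (by simpa using
      (by exact_mod_cast hc2 : (2 : ℝ) ≤ |(γ 1 0 : ℝ)|))))))
  have hre : (ellipticFixedPoint γ).re = (γ 0 0 - γ 1 1) / (2 * γ 1 0) := by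
    simp [ellipticFixedPoint]
  have him : (ellipticFixedPoint γ).im = √(4 - (γ 0 0 + γ 1 1) ^ 2) / (2 * |γ 1 0|) := by
    simp [ellipticFixedPoint]
  generalize ellipticFixedPoint γ = p at *
  generalize γ 0 0 = a, γ 1 0 = c, γ 1 1 = d at *
  have ht' : a + d = -1 ∨ a + d = 0 ∨ a + d = 1 := by
    have : -2 < a + d ∧ a + d < 2 := ⟨by nlinarith, by nlinarith⟩
    omega
  have hc1 : c = 1 ∨ c = -1 := by rw [le_abs] at hc2; omega
  obtain ⟨m, hm, hre'⟩ : ∃ m : ℤ, (m = a - d ∨ m = d - a) ∧ p.re = m / 2 := by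
    rcases hc1 with h | h
    · exact ⟨a - d, Or.inl rfl, by rw [hre, h]; push_cast; ring⟩
    · exact ⟨d - a, Or.inr rfl, by rw [hre, h]; push_cast; ring⟩
  have him' : p.im = √(4 - (a + d) ^ 2) / 2 := by
    rw [him]; rcases hc1 with h | h <;> simp [h]
  have him_ne : a + d ≠ 0 → p.im = √3 / 2 := by
    intro h
    have : a + d = -1 ∨ a + d = 1 := by omega
    rw [him']
    rcases this with h | h <;> simp [← Int.cast_add, h] <;> norm_num
  -- `m ≡ a + d [ZMOD 2]`: the real part is a half-integer exactly when the trace is odd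
  have hcases : (a + d = 0 ∧ m = 0) ∨ (a + d ≠ 0 ∧ m = 1) ∨ (a + d ≠ 0 ∧ m = -1) ∨
      (2 ≤ m ∨ 2 ≤ -m) := by
    omega
  rcases hcases with ⟨ht0, hm0⟩ | ⟨ht1, hm1⟩ | ⟨ht1, hm1⟩ | hm2
  · left
    apply Complex.ext
    · simp [hre', hm0]
    · have : ((a : ℝ) + d) = 0 := by exact_mod_cast ht0
      simp [him', this, show (4 : ℝ) = 2 ^ 2 by norm_num]
  · right; left
    apply Complex.ext
    · simp [ptJ, hre', hm1]
    · simp [ptJ, him_ne ht1]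
  · right; right; left
    apply Complex.ext
    · simp [ptJ', hre', hm1, neg_div]
    · simp [ptJ', him_ne ht1]
  · refine Or.inr (Or.inr (Or.inr (Or.inr ?_)))
    rw [hre', abs_div, abs_two, le_div_iff₀ two_pos, one_mul, ← Int.cast_abs]
    exact_mod_cast (le_abs.mpr hm2)

end ModularGroup

open ModularGroup

noncomputable def spacingScale (w : ℍ) : ℝ :=
  min (min (dist w I) (min (dist w ptJ) (dist w ptJ'))) (1 / w.im)

theorem spacingScale_mul_im_le_one (w : ℍ) : spacingScale w * w.im ≤ 1 := by
  rw [← le_div_iff₀ w.im_pos]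
  exact min_le_right _ _

theorem spacingScale_le_four_mul_norm_sub_ellipticFixedPoint {w : ℍ} (hw : w ∈ 𝒟)
    {γ : SL(2, ℤ)} (hc : γ 1 0 ≠ 0) (ht : (γ 0 0 + γ 1 1) ^ 2 < 4) :
    spacingScale w ≤ 4 * ‖(w : ℂ) - ellipticFixedPoint γ‖ := by
  have hw2 := one_half_le_im_of_mem_fd hw
  have near : ∀ e : ℍ, 1 / 2 ≤ e.im → ellipticFixedPoint γ = e →
      dist w e ≤ 4 * ‖(w : ℂ) - ellipticFixedPoint γ‖ := by
    intro e he hp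
    rw [hp]
    linarith [dist_le_two_mul_norm_sub hw2 he, norm_nonneg ((w : ℂ) - e)]
  have h3 : (1 : ℝ) / 2 ≤ √3 / 2 := by gcongr; exact one_le_sqrt.mpr (by norm_num)
  have hJ : 1 / 2 ≤ ptJ.im := by simpa [ptJ] using h3
  have hJ' : 1 / 2 ≤ ptJ'.im := by simpa [ptJ'] using h3
  unfold spacingScale
  rcases ellipticFixedPoint_eq_or hc ht with h | h | h | hfar
  · exact min_le_of_left_le (min_le_of_left_le (near I (by norm_num) h))
  · exact min_le_of_left_le (min_le_of_right_le (min_le_of_left_le (near ptJ hJ h)))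
  · exact min_le_of_left_le (min_le_of_right_le (min_le_of_right_le (near ptJ' hJ' h)))
  · exact min_le_of_right_le (one_div_im_le_four_mul_norm_sub hw hfar)

theorem spacingScale_mul_im_le {w : ℍ} (hw : w ∈ 𝒟) {γ : SL(2, ℤ)} (h1 : γ ≠ 1) (h2 : γ ≠ -1) :
    spacingScale w * w.im ≤ 4 * ‖fixedPointPoly γ w‖ := by
  have hy := three_le_four_mul_im_sq_of_mem_fd hw
  have hM := spacingScale_mul_im_le_one w
  by_cases hc : γ 1 0 = 0
  · linarith [one_le_norm_fixedPointPoly_of_c_eq_zero hc h1 h2 w]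
  have hcR : (γ : SL(2, ℝ)) 1 0 ≠ 0 := by simpa using hc
  have hc1 : 1 ≤ |(γ : SL(2, ℝ)) 1 0| := by
    simpa using (by exact_mod_cast Int.one_le_abs hc : (1 : ℝ) ≤ |(γ 1 0 : ℝ)|)
  rcases lt_or_ge ((γ 0 0 + γ 1 1) ^ 2) 4 with ht | ht
  · have htR : ((γ : SL(2, ℝ)) 0 0 + (γ : SL(2, ℝ)) 1 1) ^ 2 ≤ 4 := by
      simpa using (by exact_mod_cast ht.le : ((γ 0 0 : ℝ) + γ 1 1) ^ 2 ≤ 4)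
    have hP := abs_mul_im_mul_norm_sub_le_norm_fixedPointPoly hcR htR w
    have hp := spacingScale_le_four_mul_norm_sub_ellipticFixedPoint hw hc ht
    set r := ‖(w : ℂ) - ellipticFixedPoint γ‖
    calc spacingScale w * w.im ≤ 4 * r * w.im := by gcongr
      _ ≤ 4 * (|(γ : SL(2, ℝ)) 1 0| * w.im * r) := by
        nlinarith [mul_nonneg w.im_pos.le (norm_nonneg ((w : ℂ) - ellipticFixedPoint γ))]
      _ ≤ 4 * ‖fixedPointPoly γ w‖ := by gcongr
  · have htR : 4 ≤ ((γ : SL(2, ℝ)) 0 0 + (γ : SL(2, ℝ)) 1 1) ^ 2 := by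
      simpa using (by exact_mod_cast ht : (4 : ℝ) ≤ ((γ 0 0 : ℝ) + γ 1 1) ^ 2)
    have hP := abs_mul_im_sq_le_norm_fixedPointPoly hcR htR w
    nlinarith

theorem min_spacing :
    ∃ c > 0, ∀ w ∈ ModularGroup.fd,
      ∀ γ : Matrix.SpecialLinearGroup (Fin 2) ℤ, γ ≠ 1 → γ ≠ -1 →
        c * min (min (dist w UpperHalfPlane.I) (min (dist w ptJ) (dist w ptJ')))
            (1 / w.im) ≤ dist w (γ • w) := by
  refine ⟨1 / 5, by norm_num, fun w hw γ h1 h2 => ?_⟩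
  change 1 / 5 * spacingScale w ≤ dist w ((γ : SL(2, ℝ)) • w)
  have hM0 : 0 ≤ spacingScale w :=
    le_min (le_min dist_nonneg (le_min dist_nonneg dist_nonneg)) (by positivity)
  have hM2 : spacingScale w ≤ 2 := by
    nlinarith [spacingScale_mul_im_le_one w, one_half_le_im_of_mem_fd hw]
  have hX : spacingScale w / 8 ≤ ‖fixedPointPoly γ w‖ / (2 * w.im) := by
    rw [le_div_iff₀ (by linarith [w.im_pos])]
    linarith [spacingScale_mul_im_le hw h1 h2]
  rw [dist_smul_eq]
  calc 1 / 5 * spacingScale w = 2 * (spacingScale w / 8 / (5 / 4)) := by ring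
    _ ≤ 2 * (spacingScale w / 8 / (1 + spacingScale w / 8)) := by gcongr; linarith
    _ ≤ 2 * arsinh (spacingScale w / 8) := by gcongr; exact div_one_add_le_arsinh (by positivity)
    _ ≤ 2 * arsinh (‖fixedPointPoly γ w‖ / (2 * w.im)) := by gcongr
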